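/- For a positive integer n and real Y ≥ 1, the volume of the region {(x₁,…,xₙ) ∈ [1,∞)ⁿ : x₁⋯xₙ ≤ Y} equals (-1)ⁿ + Y·∑_{j=0}^{n-1} ((-1)^{n-1-j}/j!)·(log Y)^j. -/

import Mathlib

open MeasureTheory Real

/-! Slicing along the first coordinate (Fubini) shows that the volume `V n Y` satisfies
`V (n+1) Y = ∫ t in 1..Y, V n (Y / t)` and `V 0 Y = 1`. The closed form
`(-1)^n + s * P n (log s)`, with `P = volumeLogSum`, satisfies the same recursion: `P (n+1)' = P n`
gives `(V (n+1) s / s)' = V n s / s ^ 2`, so `t ↦ -Y * V (n+1) (Y / t) / (Y / t)` is an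
antiderivative of `t ↦ V n (Y / t)`, and it vanishes at `t = Y` because `V (n+1) 1 = 0`. -/

noncomputable def volumeLogSum (n : ℕ) (y : ℝ) : ℝ :=
  ∑ j ∈ Finset.range n, ((-1 : ℝ) ^ (n - 1 - j) / Nat.factorial j) * y ^ j

noncomputable def productRegionVolume (n : ℕ) (Y : ℝ) : ℝ :=
  (-1 : ℝ) ^ n + Y * volumeLogSum n (log Y)

def productRegion (n : ℕ) (Y : ℝ) : Set (Fin n → ℝ) :=
  {x | (∀ i, 1 ≤ x i) ∧ ∏ i, x i ≤ Y}

lemma volumeLogSum_succ (n : ℕ) (y : ℝ) :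
    volumeLogSum (n + 1) y
      = ∑ j ∈ Finset.range n, ((-1 : ℝ) ^ (n - 1 - j) / Nat.factorial (j + 1)) * y ^ (j + 1)
        + (-1) ^ n := by
  rw [volumeLogSum, Finset.sum_range_succ']
  congr 1
  · refine Finset.sum_congr rfl fun j _ => ?_
    rw [show n + 1 - 1 - (j + 1) = n - 1 - j by omega]
  · simp

lemma continuous_volumeLogSum (n : ℕ) : Continuous (volumeLogSum n) := by
  unfold volumeLogSum
  fun_prop

lemma hasDerivAt_volumeLogSum_succ (n : ℕ) (y : ℝ) :
    HasDerivAt (volumeLogSum (n + 1)) (volumeLogSum n y) y := by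
  rw [funext (volumeLogSum_succ n)]
  refine (HasDerivAt.fun_sum fun j _ => (hasDerivAt_pow (j + 1) y).const_mul _).add_const _
    |>.congr_deriv (Finset.sum_congr rfl fun j _ => ?_)
  rw [Nat.factorial_succ]
  push_cast
  field_simp

lemma continuousOn_productRegionVolume (n : ℕ) :
    ContinuousOn (productRegionVolume n) (Set.Ioi 0) := by
  unfold productRegionVolume
  have := continuous_volumeLogSum n
  fun_prop (disch := intro x hx; exact ne_of_gt hx)

lemma productRegionVolume_succ_one (n : ℕ) : productRegionVolume (n + 1) 1 = 0 := by
  simp [productRegionVolume, volumeLogSum_succ, pow_succ]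

lemma hasDerivAt_productRegionVolume_succ_div_self (n : ℕ) {s : ℝ} (hs : 0 < s) :
    HasDerivAt (fun s => productRegionVolume (n + 1) s / s)
      (productRegionVolume n s / s ^ 2) s := by
  have h := (((hasDerivAt_id s).mul ((hasDerivAt_volumeLogSum_succ n _).comp s
    (hasDerivAt_log hs.ne'))).const_add ((-1 : ℝ) ^ (n + 1))).div (hasDerivAt_id s) hs.ne'
  refine h.congr_deriv ?_
  simp only [productRegionVolume, id, Function.comp, Pi.mul_apply]
  field_simp
  ring

lemma continuousOn_productRegionVolume_div (n : ℕ) (Y : ℝ) :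
    ContinuousOn (fun t => productRegionVolume n (Y / t)) (Set.Icc 1 Y) :=
  (continuousOn_productRegionVolume n).comp (continuousOn_const.div continuousOn_id
    fun t ht => by linarith [ht.1]) fun t ⟨h1, h2⟩ =>
    show 0 < Y / t from div_pos (by linarith) (by linarith)

lemma integral_productRegionVolume_div (n : ℕ) {Y : ℝ} (hY : 1 ≤ Y) :
    ∫ t in (1 : ℝ)..Y, productRegionVolume n (Y / t) = productRegionVolume (n + 1) Y := by
  have hpos : ∀ t ∈ Set.uIcc 1 Y, 0 < t := fun t ht => by
    rw [Set.uIcc_of_le hY] at ht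
    linarith [ht.1]
  have hderiv : ∀ t ∈ Set.uIcc 1 Y, HasDerivAt
      (fun t => -Y * (productRegionVolume (n + 1) (Y / t) / (Y / t)))
      (productRegionVolume n (Y / t)) t := fun t ht => by
    have ht := hpos t ht
    refine (((hasDerivAt_productRegionVolume_succ_div_self n (div_pos (by linarith) ht)).comp t
      ((hasDerivAt_inv ht.ne').const_mul Y)).const_mul (-Y)).congr_deriv ?_
    field_simp
  have hint : IntervalIntegrable (fun t => productRegionVolume n (Y / t)) volume 1 Y :=
    (continuousOn_productRegionVolume_div n Y).intervalIntegrable_of_Icc hY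
  rw [intervalIntegral.integral_eq_sub_of_hasDerivAt hderiv hint]
  field_simp
  simp [productRegionVolume_succ_one]

lemma productRegionVolume_nonneg (n : ℕ) {Y : ℝ} (hY : 1 ≤ Y) :
    0 ≤ productRegionVolume n Y := by
  induction n generalizing Y with
  | zero => simp [productRegionVolume, volumeLogSum]
  | succ n ih =>
    rw [← integral_productRegionVolume_div n hY]
    exact intervalIntegral.integral_nonneg hY fun t ht =>
      ih ((one_le_div (by linarith [ht.1])).2 ht.2)

lemma measurableSet_productRegion (n : ℕ) (Y : ℝ) : MeasurableSet (productRegion n Y) := by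
  unfold productRegion
  measurability

lemma productRegion_zero {Y : ℝ} (hY : 1 ≤ Y) : productRegion 0 Y = Set.univ := by
  simp [productRegion, hY]

lemma cons_mem_productRegion_succ_iff {n : ℕ} {Y t : ℝ} (ht : 1 ≤ t) (y : Fin n → ℝ) :
    Fin.cons t y ∈ productRegion (n + 1) Y ↔ y ∈ productRegion n (Y / t) := by
  simp [productRegion, Fin.forall_fin_succ, Fin.prod_univ_succ, ht,
    le_div_iff₀ (by linarith : (0 : ℝ) < t), mul_comm]

lemma mem_Icc_of_cons_mem_productRegion_succ {n : ℕ} {Y t : ℝ} {y : Fin n → ℝ}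
    (h : Fin.cons t y ∈ productRegion (n + 1) Y) : t ∈ Set.Icc 1 Y := by
  obtain ⟨hge, hprod⟩ := h
  simp only [Fin.forall_fin_succ, Fin.cons_zero, Fin.cons_succ] at hge
  simp only [Fin.prod_univ_succ, Fin.cons_zero, Fin.cons_succ] at hprod
  have : 1 ≤ ∏ i, y i := Finset.one_le_prod fun i _ => hge.2 i
  exact ⟨hge.1, by nlinarith⟩

lemma volume_productRegion_succ (n : ℕ) (Y : ℝ) :
    volume (productRegion (n + 1) Y)
      = ∫⁻ t in Set.Icc 1 Y, volume (productRegion n (Y / t)) := by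
  have e := (volume_preserving_piFinSuccAbove (fun _ : Fin (n + 1) => ℝ) 0).symm
  have hS := measurableSet_productRegion (n + 1) Y
  rw [← e.measure_preimage hS.nullMeasurableSet, Measure.volume_eq_prod,
    Measure.prod_apply (e.measurable hS), ← lintegral_indicator measurableSet_Icc]
  congr 1 with t
  by_cases ht : t ∈ Set.Icc 1 Y
  · rw [Set.indicator_of_mem ht]
    congr 1 with y
    simp only [Set.mem_preimage, MeasurableEquiv.piFinSuccAbove_symm_apply,
      Fin.insertNthEquiv_zero]
    exact cons_mem_productRegion_succ_iff ht.1 y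
  · rw [Set.indicator_of_notMem ht, measure_eq_zero_iff_ae_notMem]
    filter_upwards with y hy
    simp only [Set.mem_preimage, MeasurableEquiv.piFinSuccAbove_symm_apply,
      Fin.insertNthEquiv_zero] at hy
    exact ht (mem_Icc_of_cons_mem_productRegion_succ hy)

theorem volume_productRegion (n : ℕ) {Y : ℝ} (hY : 1 ≤ Y) :
    volume (productRegion n Y) = ENNReal.ofReal (productRegionVolume n Y) := by
  induction n generalizing Y with
  | zero => simp [productRegion_zero hY, productRegionVolume, volumeLogSum, volume_pi]
  | succ n ih =>
    have hslice : ∀ t ∈ Set.Icc 1 Y, 1 ≤ Y / t := fun t ht =>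
      (one_le_div (by linarith [ht.1])).2 ht.2
    rw [volume_productRegion_succ,
      setLIntegral_congr_fun measurableSet_Icc fun t ht => ih (hslice t ht),
      ← ofReal_integral_eq_lintegral_ofReal, integral_Icc_eq_integral_Ioc,
      ← intervalIntegral.integral_of_le hY, integral_productRegionVolume_div n hY]
    · exact (continuousOn_productRegionVolume_div n Y).integrableOn_Icc
    · exact ae_restrict_of_forall_mem measurableSet_Icc fun t ht =>
        productRegionVolume_nonneg n (hslice t ht)

theorem volume_product_region_general (n : ℕ) (Y : ℝ) (hY : 1 ≤ Y) :
    (volume {x : Fin n → ℝ | (∀ i, 1 ≤ x i) ∧ ∏ i, x i ≤ Y}).toReal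
    = (-1 : ℝ) ^ n
      + Y * ∑ j ∈ Finset.range n,
          ((-1 : ℝ) ^ (n - 1 - j) / Nat.factorial j) * Real.log Y ^ j := by
  change (volume (productRegion n Y)).toReal = productRegionVolume n Y
  rw [volume_productRegion n hY, ENNReal.toReal_ofReal (productRegionVolume_nonneg n hY)]

theorem volume_product_region (n : ℕ) (hn : 1 ≤ n) (Y : ℝ) (hY : 1 ≤ Y) :
    (volume {x : Fin n → ℝ | (∀ i, 1 ≤ x i) ∧ ∏ i, x i ≤ Y}).toReal
    = (-1 : ℝ) ^ n
      + Y * ∑ j ∈ Finset.range n,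
          ((-1 : ℝ) ^ (n - 1 - j) / Nat.factorial j) * Real.log Y ^ j :=
  volume_product_region_general n Y hY
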